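/- Let p2, p3, p5, ψ40, k1, κ be positive real constants and define V_d(q1, q2) = (κ/2)·( q1 + sqrt(p3/(k1·p2·ψ40))·arctan( sqrt(p2/(k1·p3·ψ40))·sin(q2) ) )² - (p5/ψ40)·cos(q2). Then the Hessian matrix of V_d at (0,0) equals the 2×2 matrix [[κ, κ/(k1·ψ40)], [κ/(k1·ψ40), κ/(k1·ψ40)² + p5/ψ40]], and this matrix is positive definite. -/

import Mathlib

/-!
The potential has the form `V(q₁, q₂) = κ/2 (q₁ + f q₂)² + g q₂` with `f q = a arctan (b sin q)`
vanishing at `0`, so at the origin its Hessian is `[[κ, κ f'(0)], [κ f'(0), κ f'(0)² + g''(0)]]`,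
where `f'(0) = a b = 1/(k₁ψ₄₀)` and `g''(0) = p₅/ψ₄₀`. This matrix has positive corner `κ` and
determinant `κ g''(0) > 0`, hence is positive definite.
-/

open Real

theorem Matrix.posDef_fin_two_of_pos_of_sq_lt {a b d : ℝ} (ha : 0 < a) (hdet : b ^ 2 < a * d) :
    (!![a, b; b, d] : Matrix (Fin 2) (Fin 2) ℝ).PosDef := by
  refine Matrix.posDef_iff_dotProduct_mulVec.mpr ⟨?_, fun x hx => ?_⟩
  · ext i j
    fin_cases i <;> fin_cases j <;> rfl
  have hdet' := sub_pos.2 hdet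
  have key : a * dotProduct (star x) (!![a, b; b, d].mulVec x) =
      (a * x 0 + b * x 1) ^ 2 + (a * d - b ^ 2) * x 1 ^ 2 := by
    simp [dotProduct, Fin.sum_univ_two, Matrix.mulVec]
    ring
  refine pos_of_mul_pos_right ?_ ha.le
  rw [key]
  rcases eq_or_ne (x 1) 0 with h1 | h1
  · have h0 : x 0 ≠ 0 := fun h0 => hx (funext fun i => by fin_cases i <;> simp [h0, h1])
    rw [h1, mul_zero, add_zero, zero_pow two_ne_zero, mul_zero, add_zero]
    positivity
  · positivity

section ShapedPotential

variable (κ : ℝ) (f g : ℝ → ℝ)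

noncomputable def shapedPotential (q₁ q₂ : ℝ) : ℝ := κ / 2 * (q₁ + f q₂) ^ 2 + g q₂

variable {f g} {f' g' : ℝ → ℝ}

theorem hasDerivAt_shapedPotential_fst (x y : ℝ) :
    HasDerivAt (fun u => shapedPotential κ f g u y) (κ * (x + f y)) x := by
  unfold shapedPotential
  exact ((((hasDerivAt_id' x).add_const (f y)).pow 2).const_mul (κ / 2)
    |>.add_const (g y)).congr_deriv (by push_cast; ring)

theorem hasDerivAt_shapedPotential_snd (hf : ∀ y, HasDerivAt f (f' y) y)
    (hg : ∀ y, HasDerivAt g (g' y) y) (x y : ℝ) :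
    HasDerivAt (fun v => shapedPotential κ f g x v) (κ * (x + f y) * f' y + g' y) y := by
  unfold shapedPotential
  exact (((((hf y).const_add x).pow 2).const_mul (κ / 2)).add (hg y)).congr_deriv
    (by push_cast; ring)

theorem deriv_shapedPotential_fst (x y : ℝ) :
    deriv (fun u => shapedPotential κ f g u y) x = κ * (x + f y) :=
  (hasDerivAt_shapedPotential_fst κ x y).deriv

theorem deriv_shapedPotential_snd (hf : ∀ y, HasDerivAt f (f' y) y)
    (hg : ∀ y, HasDerivAt g (g' y) y) (x y : ℝ) :
    deriv (fun v => shapedPotential κ f g x v) y = κ * (x + f y) * f' y + g' y :=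
  (hasDerivAt_shapedPotential_snd κ hf hg x y).deriv

theorem deriv_deriv_shapedPotential_fst_fst (x y : ℝ) :
    deriv (fun x => deriv (fun u => shapedPotential κ f g u y) x) x = κ := by
  simp only [deriv_shapedPotential_fst]
  exact ((((hasDerivAt_id' x).add_const (f y)).const_mul κ).congr_deriv (mul_one κ)).deriv

theorem deriv_deriv_shapedPotential_fst_snd (hf : ∀ y, HasDerivAt f (f' y) y) (x y : ℝ) :
    deriv (fun y => deriv (fun u => shapedPotential κ f g u y) x) y = κ * f' y := by
  simp only [deriv_shapedPotential_fst]
  exact (((hf y).const_add x).const_mul κ).deriv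

theorem deriv_deriv_shapedPotential_snd_fst (hf : ∀ y, HasDerivAt f (f' y) y)
    (hg : ∀ y, HasDerivAt g (g' y) y) (x y : ℝ) :
    deriv (fun x => deriv (fun v => shapedPotential κ f g x v) y) x = κ * f' y := by
  simp only [deriv_shapedPotential_snd κ hf hg]
  exact (((((hasDerivAt_id' x).add_const (f y)).const_mul κ).mul_const (f' y)).add_const
    (g' y)).deriv.trans (by ring)

theorem deriv_deriv_shapedPotential_snd_snd (hf : ∀ y, HasDerivAt f (f' y) y)
    (hg : ∀ y, HasDerivAt g (g' y) y) {f'' g'' : ℝ} (x y : ℝ) (hf' : HasDerivAt f' f'' y)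
    (hg' : HasDerivAt g' g'' y) :
    deriv (fun y => deriv (fun v => shapedPotential κ f g x v) y) y =
      κ * f' y ^ 2 + κ * (x + f y) * f'' + g'' := by
  simp only [deriv_shapedPotential_snd κ hf hg]
  exact (((((hf y).const_add x).const_mul κ).fun_mul hf').fun_add hg').deriv.trans (by ring)

theorem hessian_shapedPotential_zero (hf : ∀ y, HasDerivAt f (f' y) y)
    (hg : ∀ y, HasDerivAt g (g' y) y) (hf0 : f 0 = 0) {f'' g'' : ℝ} (hf' : HasDerivAt f' f'' 0)
    (hg' : HasDerivAt g' g'' 0) :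
    (!![deriv (fun x => deriv (fun u => shapedPotential κ f g u 0) x) 0,
        deriv (fun x => deriv (fun v => shapedPotential κ f g x v) 0) 0;
        deriv (fun y => deriv (fun u => shapedPotential κ f g u y) 0) 0,
        deriv (fun y => deriv (fun v => shapedPotential κ f g 0 v) y) 0] :
        Matrix (Fin 2) (Fin 2) ℝ) =
      !![κ, κ * f' 0; κ * f' 0, κ * f' 0 ^ 2 + g''] := by
  rw [deriv_deriv_shapedPotential_fst_fst, deriv_deriv_shapedPotential_snd_fst κ hf hg,
    deriv_deriv_shapedPotential_fst_snd κ hf,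
    deriv_deriv_shapedPotential_snd_snd κ hf hg 0 0 hf' hg', hf0]
  simp

end ShapedPotential

theorem hasDerivAt_mul_arctan_mul_sin (a b t : ℝ) :
    HasDerivAt (fun t => a * arctan (b * sin t)) (a * b * cos t / (1 + (b * sin t) ^ 2)) t :=
  (((hasDerivAt_sin t).const_mul b).arctan.const_mul a).congr_deriv (by field_simp)

theorem sqrt_div_mul_sqrt_div {p q k ψ : ℝ} (hp : 0 < p) (hq : 0 < q) (hk : 0 < k) (hψ : 0 < ψ) :
    sqrt (p / (k * q * ψ)) * sqrt (q / (k * p * ψ)) = 1 / (k * ψ) := by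
  rw [← sqrt_mul (by positivity), ← sqrt_sq (by positivity : 0 ≤ 1 / (k * ψ))]
  congr 1
  field_simp

/-- the Hessian of the shaped potential energy V_d at (0,0) equals
[[κ, κ/(k1·ψ40)], [κ/(k1·ψ40), κ/(k1·ψ40)² + p5/ψ40]], and this matrix is
positive definite. -/
theorem stmt8 (p2 p3 p5 ψ40 k1 κ : ℝ) (hp2 : 0 < p2) (hp3 : 0 < p3)
    (hp5 : 0 < p5) (hψ40 : 0 < ψ40) (hk1 : 0 < k1) (hκ : 0 < κ)
    (Vd : ℝ → ℝ → ℝ)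
    (hVd : ∀ q1 q2, Vd q1 q2 =
      κ / 2 * (q1 + sqrt (p3 / (k1 * p2 * ψ40))
          * arctan (sqrt (p2 / (k1 * p3 * ψ40)) * sin q2)) ^ 2
        - p5 / ψ40 * cos q2) :
    (!![deriv (fun x => deriv (fun u => Vd u 0) x) 0,
        deriv (fun x => deriv (fun v => Vd x v) 0) 0;
        deriv (fun y => deriv (fun u => Vd u y) 0) 0,
        deriv (fun y => deriv (fun v => Vd 0 v) y) 0] : Matrix (Fin 2) (Fin 2) ℝ)
      = !![κ, κ / (k1 * ψ40);
           κ / (k1 * ψ40), κ / (k1 * ψ40) ^ 2 + p5 / ψ40] ∧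
    (!![κ, κ / (k1 * ψ40);
        κ / (k1 * ψ40), κ / (k1 * ψ40) ^ 2 + p5 / ψ40] : Matrix (Fin 2) (Fin 2) ℝ).PosDef := by
  set a := sqrt (p3 / (k1 * p2 * ψ40))
  set b := sqrt (p2 / (k1 * p3 * ψ40))
  have hV : Vd = shapedPotential κ (fun t => a * arctan (b * sin t))
      (fun t => -(p5 / ψ40) * cos t) := by
    funext q1 q2
    rw [hVd, shapedPotential]
    ring
  have hf' : HasDerivAt (fun t => a * b * cos t / (1 + (b * sin t) ^ 2)) _ 0 :=
    (by fun_prop (disch := positivity) :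
      DifferentiableAt ℝ (fun t => a * b * cos t / (1 + (b * sin t) ^ 2)) 0).hasDerivAt
  have hab : a * b = 1 / (k1 * ψ40) := sqrt_div_mul_sqrt_div hp3 hp2 hk1 hψ40
  constructor
  · rw [hV, hessian_shapedPotential_zero κ (hasDerivAt_mul_arctan_mul_sin a b)
      (fun t => (hasDerivAt_cos t).const_mul _) (by simp) hf' ((hasDerivAt_sin 0).neg.const_mul _)]
    simp [hab]
    constructor <;> ring
  · refine Matrix.posDef_fin_two_of_pos_of_sq_lt hκ ?_
    have hc : 0 < κ * (p5 / ψ40) := by positivity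
    calc (κ / (k1 * ψ40)) ^ 2 < (κ / (k1 * ψ40)) ^ 2 + κ * (p5 / ψ40) :=
          lt_add_of_pos_right _ hc
      _ = κ * (κ / (k1 * ψ40) ^ 2 + p5 / ψ40) := by ring
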